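/- The set of group-like elements of the Radford algebra H is exactly {g^l | 0 ≤ l < n}; that is, an element h ∈ H satisfies Δ(h) = h ⊗ h and ε(h) = 1 if and only if h = g^l for some 0 ≤ l < n. -/

import Mathlib

open TensorProduct

noncomputable section

/-- The Gaussian (`q`-)binomial coefficient `C(m, k)_q`, defined by the `q`-Pascal
recurrence `C(m+1, k+1)_q = C(m, k)_q + q^(k+1) * C(m, k+1)_q`. -/
def qBinom (q : ℂ) : ℕ → ℕ → ℂ
  | _, 0 => 1
  | 0, _ + 1 => 0
  | m + 1, k + 1 => qBinom q m k + q ^ (k + 1) * qBinom q m (k + 1)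

/-- The Radford algebra: a Hopf algebra `H` over `ℂ` generated by elements
`g, x, y` subject to the relations `g^n = 1`, `x^n = y^n = 0`, `xg = ω g x`,
`g y = ω y g`, `x y = ω y x`, where `ω` is a root of unity of order `n > 1`,
with the comultiplication, counit and antipode determined by
`Δ(g) = g ⊗ g`, `ε(g) = 1`, `S(g) = g^(n-1)`,
`Δ(x) = x ⊗ g + 1 ⊗ x`, `ε(x) = 0`, `S(x) = -x g^(n-1)`,
`Δ(y) = y ⊗ g + 1 ⊗ y`, `ε(y) = 0`, `S(y) = -y g^(n-1)`,
and with canonical `ℂ`-basis `{y^r x^s g^l | 0 ≤ r, s, l < n}`. -/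
structure RadfordAlgebra (n : ℕ) (ω : ℂ) (H : Type*) [Ring H] [HopfAlgebra ℂ H] where
  g : H
  x : H
  y : H
  hn : 1 < n
  hω : IsPrimitiveRoot ω n
  g_pow : g ^ n = 1
  x_pow : x ^ n = 0
  y_pow : y ^ n = 0
  rel_xg : x * g = ω • (g * x)
  rel_gy : g * y = ω • (y * g)
  rel_xy : x * y = ω • (y * x)
  comul_g : Coalgebra.comul (R := ℂ) g = g ⊗ₜ[ℂ] g
  counit_g : Coalgebra.counit (R := ℂ) g = 1
  antipode_g : HopfAlgebra.antipode (R := ℂ) g = g ^ (n - 1)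
  comul_x : Coalgebra.comul (R := ℂ) x = x ⊗ₜ[ℂ] g + 1 ⊗ₜ[ℂ] x
  counit_x : Coalgebra.counit (R := ℂ) x = 0
  antipode_x : HopfAlgebra.antipode (R := ℂ) x = -(x * g ^ (n - 1))
  comul_y : Coalgebra.comul (R := ℂ) y = y ⊗ₜ[ℂ] g + 1 ⊗ₜ[ℂ] y
  counit_y : Coalgebra.counit (R := ℂ) y = 0
  antipode_y : HopfAlgebra.antipode (R := ℂ) y = -(y * g ^ (n - 1))
  gen : Algebra.adjoin ℂ ({g, x, y} : Set H) = ⊤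
  basis : Module.Basis (Fin n × Fin n × Fin n) ℂ H
  basis_eq : ∀ r s l : Fin n, basis (r, s, l) = y ^ (r : ℕ) * x ^ (s : ℕ) * g ^ (l : ℕ)

/-- A `*`-structure on a Hopf algebra `H` over `ℂ`: a conjugate-linear map
`* : H → H` such that `(h*)* = h`, `(hl)* = l* h*`,
`Δ(h*) = Σ (h₁)* ⊗ (h₂)*` and `S(S(h*)*) = h` for all `h, l ∈ H`.
(The condition on `Δ` is expressed via the auxiliary additive map `starTensor`
on `H ⊗[ℂ] H` sending `a ⊗ b` to `a* ⊗ b*`, which is uniquely determined by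
its two defining properties.) -/
structure HopfStarStructure (H : Type*) [Ring H] [HopfAlgebra ℂ H] where
  star : H → H
  star_add : ∀ a b : H, star (a + b) = star a + star b
  star_smul : ∀ (c : ℂ) (a : H), star (c • a) = (starRingEnd ℂ c) • star a
  star_star : ∀ a : H, star (star a) = a
  star_mul : ∀ a b : H, star (a * b) = star b * star a
  starTensor : H ⊗[ℂ] H → H ⊗[ℂ] H
  starTensor_add : ∀ u v : H ⊗[ℂ] H, starTensor (u + v) = starTensor u + starTensor v
  starTensor_tmul : ∀ a b : H, starTensor (a ⊗ₜ[ℂ] b) = star a ⊗ₜ[ℂ] star b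
  comul_star : ∀ a : H,
    Coalgebra.comul (R := ℂ) (star a) = starTensor (Coalgebra.comul (R := ℂ) a)
  antipode_star : ∀ a : H,
    HopfAlgebra.antipode (R := ℂ) (star (HopfAlgebra.antipode (R := ℂ) (star a))) = a

/-- Two `*`-structures `*'` and `*''` on a Hopf algebra `H` over `ℂ` are
equivalent if there is a Hopf algebra automorphism `ψ` of `H` such that
`ψ(h^{*'}) = ψ(h)^{*''}` for all `h ∈ H`. -/
def HopfStarStructure.Equivalent {H : Type*} [Ring H] [HopfAlgebra ℂ H]
    (s₁ s₂ : HopfStarStructure H) : Prop :=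
  ∃ ψ : H ≃ₐc[ℂ] H, ∀ h : H, ψ (s₁.star h) = s₂.star (ψ h)

/-
Give `y` and `x` weight 1 and `g` weight 0, and let `F d` be the span of the basis monomials
`y^r x^s g^l` with `r + s ≤ d`. The commutation relations make `F` multiplicative, so `Δ`, an
algebra map sending `x, y` to weight `≤ 1` and `g` to weight `0`, maps `F d` into the span of
the tensors of basis monomials of total weight `≤ d`. If `y^r x^s g^l` occurs with coefficient
`c ≠ 0` in a group-like `h ∈ F d`, then `c²` is a coefficient of `h ⊗ h = Δ h` of total weight
`2 (r + s)`, so `h ∈ F (d / 2)`. Iterating, `h ∈ F 0 = span {g^l}`, and group-like elements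
are linearly independent.
-/

namespace Module.Basis

section Module

variable {R M N ι κ : Type*} [CommSemiring R] [AddCommMonoid M] [Module R M]
  [AddCommMonoid N] [Module R N]

def spanWeightLE (b : Basis ι R M) (wt : ι → ℕ) (d : ℕ) : Submodule R M :=
  Submodule.span R (b '' {i | wt i ≤ d})

variable {b : Basis ι R M} {wt : ι → ℕ} {c : Basis κ R N} {wt' : κ → ℕ}

theorem mem_spanWeightLE {m : M} {d : ℕ} :
    m ∈ b.spanWeightLE wt d ↔ ∀ i, b.repr m i ≠ 0 → wt i ≤ d := by
  simp [spanWeightLE, mem_span_image, Set.subset_def]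

theorem spanWeightLE_mono : Monotone (b.spanWeightLE wt) :=
  fun _ _ hde => Submodule.span_mono <| Set.image_mono fun _ hi => le_trans hi hde

theorem apply_mem_spanWeightLE (b : Basis ι R M) (i : ι) : b i ∈ b.spanWeightLE wt (wt i) :=
  Submodule.subset_span ⟨i, le_refl (wt i), rfl⟩

theorem mem_spanWeightLE_support_sup (m : M) :
    m ∈ b.spanWeightLE wt ((b.repr m).support.sup wt) :=
  mem_spanWeightLE.2 fun _ hi => Finset.le_sup (Finsupp.mem_support_iff.2 hi)

theorem tmul_mem_spanWeightLE {m : M} {n : N} {d e : ℕ} (hm : m ∈ b.spanWeightLE wt d)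
    (hn : n ∈ c.spanWeightLE wt' e) :
    m ⊗ₜ[R] n ∈ (b.tensorProduct c).spanWeightLE (fun p => wt p.1 + wt' p.2) (d + e) := by
  refine mem_spanWeightLE.2 fun ⟨i, j⟩ hij => ?_
  rw [tensorProduct_repr_tmul_apply, smul_eq_mul] at hij
  exact add_le_add (mem_spanWeightLE.1 hm i (right_ne_zero_of_mul hij))
    (mem_spanWeightLE.1 hn j (left_ne_zero_of_mul hij))

end Module

section Algebra

variable {R A B ι κ : Type*} [CommSemiring R] [Semiring A] [Algebra R A] [Semiring B]
  [Algebra R B] {b : Basis ι R A} {c : Basis κ R B} {wt : ι → ℕ} {wt' : κ → ℕ}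

theorem gradedMonoid_spanWeightLE (one_mem : (1 : A) ∈ b.spanWeightLE wt 0)
    (mul_mem : ∀ i j, b i * b j ∈ b.spanWeightLE wt (wt i + wt j)) :
    SetLike.GradedMonoid (b.spanWeightLE wt) where
  one_mem := one_mem
  mul_mem d e x y hx hy := by
    refine Submodule.mul_le.1 ?_ x hx y hy
    rw [spanWeightLE, spanWeightLE, Submodule.span_mul_span, Submodule.span_le]
    rintro _ ⟨_, ⟨i, hi, rfl⟩, _, ⟨j, hj, rfl⟩, rfl⟩
    exact spanWeightLE_mono (add_le_add hi hj) (mul_mem i j)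

instance [SetLike.GradedMonoid (b.spanWeightLE wt)]
    [SetLike.GradedMonoid (c.spanWeightLE wt')] :
    SetLike.GradedMonoid ((b.tensorProduct c).spanWeightLE (fun p => wt p.1 + wt' p.2)) :=
  gradedMonoid_spanWeightLE (by
      simpa [Algebra.TensorProduct.one_def] using tmul_mem_spanWeightLE
        (SetLike.one_mem_graded (b.spanWeightLE wt)) (SetLike.one_mem_graded (c.spanWeightLE wt')))
    fun p q => by
      rw [tensorProduct_apply', tensorProduct_apply', Algebra.TensorProduct.tmul_mul_tmul,
        add_add_add_comm]
      exact tmul_mem_spanWeightLE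
        (SetLike.mul_mem_graded (b.apply_mem_spanWeightLE p.1) (b.apply_mem_spanWeightLE q.1))
        (SetLike.mul_mem_graded (c.apply_mem_spanWeightLE p.2) (c.apply_mem_spanWeightLE q.2))

end Algebra

end Module.Basis

open Module Basis Coalgebra

theorem IsGroupLikeElem.mem_of_mem_span {K A : Type*} [Field K] [AddCommGroup A] [Module K A]
    [Coalgebra K A] {s : Set A} (hs : ∀ a ∈ s, IsGroupLikeElem K a) {a : A}
    (ha : IsGroupLikeElem K a) (hspan : a ∈ Submodule.span K s) : a ∈ s :=
  (linearIndepOn_id_insert_iff.1 <| linearIndepOn_isGroupLikeElem.mono <|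
    Set.insert_subset ha hs).2 hspan

section GroupLike

variable {K A ι : Type*} [CommRing K] [AddCommMonoid A] [Module K A] [Coalgebra K A]

def Module.Basis.IsComulFiltered (b : Basis ι K A) (wt : ι → ℕ) : Prop :=
  ∀ i, comul (R := K) (b i) ∈ (b.tensorProduct b).spanWeightLE (fun p => wt p.1 + wt p.2) (wt i)

variable {b : Basis ι K A} {wt : ι → ℕ}

theorem Module.Basis.IsComulFiltered.comul_mem_spanWeightLE (hcomul : b.IsComulFiltered wt)
    {a : A} {d : ℕ} (ha : a ∈ b.spanWeightLE wt d) :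
    comul (R := K) a ∈ (b.tensorProduct b).spanWeightLE (fun p => wt p.1 + wt p.2) d := by
  have : b.spanWeightLE wt d ≤
      ((b.tensorProduct b).spanWeightLE (fun p => wt p.1 + wt p.2) d).comap (comul (R := K)) :=
    Submodule.span_le.2 fun _ ⟨i, hi, hbi⟩ => hbi ▸ spanWeightLE_mono hi (hcomul i)
  exact this ha

variable [IsDomain K]

theorem IsGroupLikeElem.mem_spanWeightLE_div_two
    (hcomul : b.IsComulFiltered wt) {a : A} (ha : IsGroupLikeElem K a) {d : ℕ}
    (hd : a ∈ b.spanWeightLE wt d) :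
    a ∈ b.spanWeightLE wt (d / 2) := by
  have hΔ := mem_spanWeightLE.1 (hcomul.comul_mem_spanWeightLE hd)
  refine mem_spanWeightLE.2 fun i hi => ?_
  have : wt i + wt i ≤ d := hΔ (i, i) (by simpa [ha.comul_eq_tmul_self] using hi)
  omega

theorem IsGroupLikeElem.mem_spanWeightLE_zero
    (hcomul : b.IsComulFiltered wt) {a : A} (ha : IsGroupLikeElem K a) :
    a ∈ b.spanWeightLE wt 0 := by
  suffices ∀ d, a ∈ b.spanWeightLE wt d → a ∈ b.spanWeightLE wt 0 from
    this _ (mem_spanWeightLE_support_sup a)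
  intro d
  induction d using Nat.strong_induction_on with
  | _ d ih =>
    intro hd
    rcases Nat.eq_zero_or_pos d with rfl | hpos
    · exact hd
    · exact ih (d / 2) (Nat.div_lt_self hpos one_lt_two) (ha.mem_spanWeightLE_div_two hcomul hd)

end GroupLike

theorem pow_mul_pow_of_mul_eq_smul {K A : Type*} [CommSemiring K] [Semiring A] [Algebra K A]
    {q : K} {a b : A} (h : b * a = q • (a * b)) (j k : ℕ) :
    b ^ j * a ^ k = q ^ (j * k) • (a ^ k * b ^ j) := by
  have hk : ∀ k : ℕ, b * a ^ k = q ^ k • (a ^ k * b) := by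
    intro k
    induction k with
    | zero => simp
    | succ k ih =>
      rw [pow_succ, ← mul_assoc, ih, smul_mul_assoc, mul_assoc, h, mul_smul_comm, smul_smul,
        ← mul_assoc, ← pow_succ, pow_succ q]
  induction j with
  | zero => simp
  | succ j ih =>
    rw [pow_succ, mul_assoc, hk, mul_smul_comm, ← mul_assoc, ih, smul_mul_assoc, smul_smul,
      mul_assoc, ← pow_succ, ← pow_add, Nat.succ_mul, add_comm k]

namespace RadfordAlgebra

variable {n : ℕ} {ω : ℂ} {H : Type*} [Ring H] [HopfAlgebra ℂ H] (R : RadfordAlgebra n ω H)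

def weight (w : Fin n × Fin n × Fin n) : ℕ := w.1 + w.2.1

theorem g_mul_x : R.g * R.x = ω⁻¹ • (R.x * R.g) := by
  rw [R.rel_xg, smul_smul, inv_mul_cancel₀ (R.hω.ne_zero (by have := R.hn; omega)), one_smul]

theorem monomial_mem_spanWeightLE (r s l : ℕ) :
    R.y ^ r * R.x ^ s * R.g ^ l ∈ R.basis.spanWeightLE weight (r + s) := by
  by_cases hr : r < n
  · by_cases hs : s < n
    · have hn : 0 < n := by omega
      have hb := R.basis.apply_mem_spanWeightLE (wt := weight)
        (⟨r, hr⟩, ⟨s, hs⟩, ⟨l % n, Nat.mod_lt l hn⟩)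
      rwa [R.basis_eq, ← pow_eq_pow_mod l R.g_pow] at hb
    · rw [pow_eq_zero_of_le (not_lt.1 hs) R.x_pow, mul_zero, zero_mul]
      exact zero_mem _
  · rw [pow_eq_zero_of_le (not_lt.1 hr) R.y_pow, zero_mul, zero_mul]
    exact zero_mem _

theorem basis_mul_basis (v w : Fin n × Fin n × Fin n) :
    R.basis v * R.basis w =
      (ω ^ ((v.2.2 : ℕ) * w.1 + (v.2.1 : ℕ) * w.1) * ω⁻¹ ^ ((v.2.2 : ℕ) * w.2.1)) •
        (R.y ^ ((v.1 : ℕ) + w.1) * R.x ^ ((v.2.1 : ℕ) + w.2.1) *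
          R.g ^ ((v.2.2 : ℕ) + w.2.2)) := by
  obtain ⟨r, s, l⟩ := v
  obtain ⟨r', s', l'⟩ := w
  have gy := pow_mul_pow_of_mul_eq_smul R.rel_gy l r'
  have xy := pow_mul_pow_of_mul_eq_smul R.rel_xy s r'
  have gx := pow_mul_pow_of_mul_eq_smul R.g_mul_x l s'
  simp only [R.basis_eq, pow_add]
  calc R.y ^ (r : ℕ) * R.x ^ (s : ℕ) * R.g ^ (l : ℕ) *
        (R.y ^ (r' : ℕ) * R.x ^ (s' : ℕ) * R.g ^ (l' : ℕ))
      = R.y ^ (r : ℕ) * (R.x ^ (s : ℕ) * (R.g ^ (l : ℕ) * R.y ^ (r' : ℕ)) *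
          R.x ^ (s' : ℕ) * R.g ^ (l' : ℕ)) := by
        simp only [mul_assoc]
    _ = ω ^ ((l : ℕ) * r') • (R.y ^ (r : ℕ) * ((R.x ^ (s : ℕ) * R.y ^ (r' : ℕ)) *
          (R.g ^ (l : ℕ) * R.x ^ (s' : ℕ)) * R.g ^ (l' : ℕ))) := by
        rw [gy]
        simp only [mul_smul_comm, smul_mul_assoc, mul_assoc]
    _ = _ := by
        rw [xy, gx]
        simp only [mul_smul_comm, smul_mul_assoc, mul_assoc, smul_smul]
        congr 1
        ring

theorem basis_mul_basis_mem (v w : Fin n × Fin n × Fin n) :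
    R.basis v * R.basis w ∈ R.basis.spanWeightLE weight (weight v + weight w) := by
  rw [basis_mul_basis, weight, weight, add_add_add_comm]
  exact Submodule.smul_mem _ _ (R.monomial_mem_spanWeightLE _ _ _)

instance (R : RadfordAlgebra n ω H) : SetLike.GradedMonoid (R.basis.spanWeightLE weight) :=
  Basis.gradedMonoid_spanWeightLE (by simpa using R.monomial_mem_spanWeightLE 0 0 0)
    R.basis_mul_basis_mem

theorem isComulFiltered : R.basis.IsComulFiltered weight := by
  intro w
  have hg : R.g ∈ R.basis.spanWeightLE weight 0 := by
    simpa using R.monomial_mem_spanWeightLE 0 0 1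
  have h1 : (1 : H) ∈ R.basis.spanWeightLE weight 0 := SetLike.one_mem_graded _
  have hskew : ∀ z : H, z ∈ R.basis.spanWeightLE weight 1 →
      z ⊗ₜ[ℂ] R.g + 1 ⊗ₜ[ℂ] z ∈
        (R.basis.tensorProduct R.basis).spanWeightLE (fun p => weight p.1 + weight p.2) 1 := by
    intro z hz
    have hzg := Basis.tmul_mem_spanWeightLE hz hg
    have h1z := Basis.tmul_mem_spanWeightLE h1 hz
    rw [add_zero] at hzg
    rw [zero_add] at h1z
    exact add_mem hzg h1z
  have hy := hskew R.y (by simpa using R.monomial_mem_spanWeightLE 1 0 0)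
  have hx := hskew R.x (by simpa using R.monomial_mem_spanWeightLE 0 1 0)
  have hgg := Basis.tmul_mem_spanWeightLE hg hg
  rw [← R.comul_y] at hy
  rw [← R.comul_x] at hx
  rw [← R.comul_g] at hgg
  obtain ⟨r, s, l⟩ := w
  rw [R.basis_eq, Bialgebra.comul_mul, Bialgebra.comul_mul, Bialgebra.comul_pow,
    Bialgebra.comul_pow, Bialgebra.comul_pow]
  have := SetLike.mul_mem_graded (SetLike.mul_mem_graded
    (SetLike.pow_mem_graded r hy) (SetLike.pow_mem_graded s hx)) (SetLike.pow_mem_graded l hgg)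
  simp only [smul_eq_mul, mul_one, mul_zero, add_zero] at this
  exact this

theorem spanWeightLE_zero_le :
    R.basis.spanWeightLE weight 0 ≤ Submodule.span ℂ {a | ∃ l < n, a = R.g ^ l} := by
  refine Submodule.span_le.2 ?_
  rintro _ ⟨⟨r, s, l⟩, hw, rfl⟩
  obtain ⟨rfl, rfl⟩ : r = ⟨0, l.pos⟩ ∧ s = ⟨0, l.pos⟩ := by
    simp only [Set.mem_ofPred_eq, weight, nonpos_iff_eq_zero, Nat.add_eq_zero_iff] at hw
    exact ⟨Fin.ext hw.1, Fin.ext hw.2⟩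
  exact Submodule.subset_span ⟨l, l.isLt, by simp [R.basis_eq]⟩

theorem isGroupLikeElem_g : IsGroupLikeElem ℂ R.g := ⟨R.counit_g, R.comul_g⟩

end RadfordAlgebra

/-- the group-like elements of the Radford algebra `H` are exactly
`{g^l | 0 ≤ l < n}`. -/
theorem radford_grouplike
    {n : ℕ} {ω : ℂ} {H : Type*} [Ring H] [HopfAlgebra ℂ H]
    (R : RadfordAlgebra n ω H) (h : H) :
    (Coalgebra.comul (R := ℂ) h = h ⊗ₜ[ℂ] h ∧ Coalgebra.counit (R := ℂ) h = 1) ↔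
      ∃ l : ℕ, l < n ∧ h = R.g ^ l := by
  constructor
  · rintro ⟨hcomul, hcounit⟩
    have hh : IsGroupLikeElem ℂ h := ⟨hcounit, hcomul⟩
    have hF0 := hh.mem_spanWeightLE_zero R.isComulFiltered
    refine hh.mem_of_mem_span ?_ (R.spanWeightLE_zero_le hF0)
    rintro _ ⟨l, -, rfl⟩
    exact R.isGroupLikeElem_g.pow
  · rintro ⟨l, -, rfl⟩
    have hgl : IsGroupLikeElem ℂ (R.g ^ l) := R.isGroupLikeElem_g.pow
    exact ⟨hgl.comul_eq_tmul_self, hgl.counit_eq_one⟩
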